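/- arXiv:1511.08935 — 3 statements merged into one kernel-verified Lean document; each statement's English description precedes it below -/
import Mathlib

section
/- Suppose F : Γ → ℝ is concave and differentiable on an open convex cone Γ ⊆ Sym(n,ℝ) containing all positive multiples μI of the identity, and suppose F satisfies: F(Γ) = (a₀,∞) for a₀ ≥ −∞ with boundary condition F3, condition F4 (F(tr) → ∞ as t → ∞ for all r ∈ Γ), and r·F_r ≥ 0 on Γ. Then for every b ∈ ℝ there exists δ₀ > 0 (depending on F and b) such that trace(F_r(r)) ≥ δ₀ whenever r ∈ Γ and F(r) ≤ b. Specifically, δ₀ may be taken as (F(μI) − b)/μ for μ large enough that F(μI) > b. -/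
/-!
Concavity bounds `F` above by its tangent plane at `r`: `F(μI) ≤ F(r) + F_r(r)(μI − r)`.
Since `F_r(r)(r) ≥ 0` and `F(r) ≤ b`, this gives `μ · trace F_r(r) ≥ F(μI) − b`, and by F4 some
`μ > 0` has `F(μI) > b`.
-/

/-- The identity matrix as an element of the space of `n × n` arrays. -/
def idm (n : ℕ) : Fin n → Fin n → ℝ := fun i j => if i = j then 1 else 0

section TangentPlane

variable {E : Type*} [NormedAddCommGroup E] [NormedSpace ℝ E] {s : Set E} {F : E → ℝ}

theorem ConcaveOn.le_add_fderiv_sub (hF : ConcaveOn ℝ s F) {x y : E} (hx : x ∈ s) (hy : y ∈ s)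
    (hd : DifferentiableAt ℝ F x) :
    F y ≤ F x + fderiv ℝ F x (y - x) := by
  set L : ℝ →ᵃ[ℝ] E := AffineMap.lineMap x y
  have hL0 : L 0 = x := AffineMap.lineMap_apply_zero x y
  have hL1 : L 1 = y := AffineMap.lineMap_apply_one x y
  have hderiv : HasDerivAt (F ∘ L) (fderiv ℝ F x (y - x)) 0 := by
    rw [← hL0] at hd
    simpa only [hL0] using hd.hasFDerivAt.comp_hasDerivAt (0 : ℝ) AffineMap.hasDerivAt_lineMap
  have hslope := (hF.comp_affineMap L).slope_le_of_hasDerivAt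
    (show (0 : ℝ) ∈ L ⁻¹' s by simpa [hL0]) (show (1 : ℝ) ∈ L ⁻¹' s by simpa [hL1])
    one_pos hderiv
  simp only [slope_def_field, Function.comp_apply, hL0, hL1, sub_zero, div_one] at hslope
  linarith

theorem ConcaveOn.sub_div_le_fderiv_apply (hF : ConcaveOn ℝ s F) {x e : E} {b μ : ℝ}
    (hx : x ∈ s) (hμe : μ • e ∈ s) (hd : DifferentiableAt ℝ F x)
    (hEuler : 0 ≤ fderiv ℝ F x x) (hb : F x ≤ b) (hμ : 0 < μ) :
    (F (μ • e) - b) / μ ≤ fderiv ℝ F x e := by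
  have htangent := hF.le_add_fderiv_sub hx hμe hd
  rw [map_sub, map_smul, smul_eq_mul] at htangent
  rw [div_le_iff₀ hμ]
  linarith

end TangentPlane

theorem stmt12_general (n : ℕ) (Γ : Set (Fin n → Fin n → ℝ)) (F : (Fin n → Fin n → ℝ) → ℝ)
    (hI : ∀ μ : ℝ, 0 < μ → μ • idm n ∈ Γ)
    (hconc : ConcaveOn ℝ Γ F)
    (hdiff : ∀ r ∈ Γ, DifferentiableAt ℝ F r)
    (hF4 : ∀ r ∈ Γ, Filter.Tendsto (fun t : ℝ => F (t • r)) Filter.atTop Filter.atTop)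
    (hEuler : ∀ r ∈ Γ, 0 ≤ fderiv ℝ F r r) :
    ∀ b : ℝ,
      (∃ δ₀ > 0, ∀ r ∈ Γ, F r ≤ b → δ₀ ≤ fderiv ℝ F r (idm n)) ∧
      (∀ μ : ℝ, 0 < μ → b < F (μ • idm n) →
        ∀ r ∈ Γ, F r ≤ b → (F (μ • idm n) - b) / μ ≤ fderiv ℝ F r (idm n)) := by
  intro b
  have hbound : ∀ μ : ℝ, 0 < μ → b < F (μ • idm n) →
      ∀ r ∈ Γ, F r ≤ b → (F (μ • idm n) - b) / μ ≤ fderiv ℝ F r (idm n) :=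
    fun μ hμ _ r hr hFr =>
      hconc.sub_div_le_fderiv_apply hr (hI μ hμ) (hdiff r hr) (hEuler r hr) hFr hμ
  refine ⟨?_, hbound⟩
  have hidm : idm n ∈ Γ := by simpa using hI 1 one_pos
  obtain ⟨μ, hbμ, hμ⟩ :=
    (((hF4 _ hidm).eventually_gt_atTop b).and (Filter.eventually_gt_atTop 0)).exists
  exact ⟨(F (μ • idm n) - b) / μ, div_pos (sub_pos.2 hbμ) hμ, hbound μ hμ hbμ⟩

/-- Condition F5 from F2–F4: if `F` is concave and differentiable on an open convex cone
`Γ` containing all `μI` (`μ > 0`), with `F > a₀` on `Γ`, `F(tr) → ∞` as `t → ∞` (F4),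
and `r·F_r ≥ 0` on `Γ`, then for every `b` there is `δ₀ > 0` with
`trace(F_r(r)) ≥ δ₀` whenever `r ∈ Γ` and `F(r) ≤ b`; indeed `δ₀ = (F(μI) − b)/μ`
works for any `μ > 0` with `F(μI) > b`. -/
theorem stmt12 (n : ℕ) (Γ : Set (Fin n → Fin n → ℝ)) (F : (Fin n → Fin n → ℝ) → ℝ)
    (hopen : IsOpen Γ) (hconv : Convex ℝ Γ)
    (hcone : ∀ t : ℝ, 0 < t → ∀ r ∈ Γ, t • r ∈ Γ)
    (hI : ∀ μ : ℝ, 0 < μ → μ • idm n ∈ Γ)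
    (hconc : ConcaveOn ℝ Γ F)
    (hdiff : ∀ r ∈ Γ, DifferentiableAt ℝ F r)
    (a₀ : EReal) (hlow : ∀ r ∈ Γ, a₀ < (F r : EReal))
    (hF4 : ∀ r ∈ Γ, Filter.Tendsto (fun t : ℝ => F (t • r)) Filter.atTop Filter.atTop)
    (hEuler : ∀ r ∈ Γ, 0 ≤ fderiv ℝ F r r) :
    ∀ b : ℝ,
      (∃ δ₀ > 0, ∀ r ∈ Γ, F r ≤ b → δ₀ ≤ fderiv ℝ F r (idm n)) ∧
      (∀ μ : ℝ, 0 < μ → b < F (μ • idm n) →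
        ∀ r ∈ Γ, F r ≤ b → (F (μ • idm n) - b) / μ ≤ fderiv ℝ F r (idm n)) :=
  stmt12_general n Γ F hI hconc hdiff hF4 hEuler
end

section
/- Under the same hypotheses as the previous identity (F orthogonally invariant, concave, twice differentiable at r ∈ Γ, D skew-symmetric), the second-variation identity holds: F^{ij}(D²r + 2DrDᵀ + r(D²)ᵀ)_{ij} + F^{ij,kl}(Dr + rDᵀ)_{ij}(Dr + rDᵀ)_{kl} = 0, where F^{ij,kl} = ∂²F/∂r_{ij}∂r_{kl}(r). In the paper's index notation with τ^k_i = D_{ki}: F^{ij}(τ^k_i τ^l_j r_{kl} + τ^k_i τ^l_k r_{jl}) + 2 F^{ij,kl} τ^s_i r_{js} τ^t_k r_{lt} = 0. -/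
open Matrix

attribute [local instance] Matrix.normedAddCommGroup Matrix.normedSpace

/-!
Conjugation by the orthogonal matrices `exp (t • D)` turns `r` into a curve
`γ t = exp (t • D) * r * (exp (t • D))ᵀ` along which `F` is constant, with `γ 0 = r`,
`γ' 0 = D r + r Dᵀ` and `γ'' 0 = D²r + 2DrDᵀ + r(D²)ᵀ`; the identity is the vanishing of the
second derivative of `F ∘ γ` at `0`.
-/

open Filter Topology

section SecondVariation

variable {𝕜 E G : Type*} [NontriviallyNormedField 𝕜]
  [NormedAddCommGroup E] [NormedSpace 𝕜 E] [NormedAddCommGroup G] [NormedSpace 𝕜 G]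

theorem eventually_fderiv_apply_eq_zero_of_eventually_const {f : E → G} {γ γ' : 𝕜 → E}
    {t₀ : 𝕜} {c : G} (hγ : ∀ᶠ t in 𝓝 t₀, HasDerivAt γ (γ' t) t)
    (hf : ∀ᶠ t in 𝓝 t₀, DifferentiableAt 𝕜 f (γ t)) (hconst : ∀ᶠ t in 𝓝 t₀, f (γ t) = c) :
    ∀ᶠ t in 𝓝 t₀, fderiv 𝕜 f (γ t) (γ' t) = 0 := by
  filter_upwards [hγ, hf, hconst.eventually_nhds] with t hγt hft hconst_t
  have hchain : HasDerivAt (fun s => f (γ s)) (fderiv 𝕜 f (γ t) (γ' t)) t :=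
    hft.hasFDerivAt.comp_hasDerivAt t hγt
  exact hchain.unique ((hasDerivAt_const t c).congr_of_eventuallyEq hconst_t)

theorem fderiv_add_fderiv_fderiv_eq_zero_of_eventually_const {f : E → G} {γ γ' : 𝕜 → E}
    {t₀ : 𝕜} {v : E} {c : G} (hf : ContDiffAt 𝕜 2 f (γ t₀))
    (hγ : ∀ᶠ t in 𝓝 t₀, HasDerivAt γ (γ' t) t) (hγ' : HasDerivAt γ' v t₀)
    (hconst : ∀ᶠ t in 𝓝 t₀, f (γ t) = c) :
    fderiv 𝕜 f (γ t₀) v + fderiv 𝕜 (fun x => fderiv 𝕜 f x (γ' t₀)) (γ t₀) (γ' t₀) = 0 := by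
  have hγt₀ : HasDerivAt γ (γ' t₀) t₀ := hγ.self_of_nhds
  have hf' : DifferentiableAt 𝕜 (fderiv 𝕜 f) (γ t₀) :=
    (hf.fderiv_right (m := 1) le_rfl).differentiableAt one_ne_zero
  have hdiff : ∀ᶠ t in 𝓝 t₀, DifferentiableAt 𝕜 f (γ t) :=
    hγt₀.continuousAt.eventually (f := γ) ((hf.eventually (by simp)).mono
      fun x hx => hx.differentiableAt (by simp))
  have hsecond : HasDerivAt (fun t => fderiv 𝕜 f (γ t) (γ' t))
      (fderiv 𝕜 (fderiv 𝕜 f) (γ t₀) (γ' t₀) (γ' t₀) + fderiv 𝕜 f (γ t₀) v) t₀ :=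
    (hf'.hasFDerivAt.comp_hasDerivAt t₀ hγt₀).clm_apply hγ'
  have hzero : HasDerivAt (fun t => fderiv 𝕜 f (γ t) (γ' t)) 0 t₀ :=
    (hasDerivAt_const t₀ 0).congr_of_eventuallyEq
      (eventually_fderiv_apply_eq_zero_of_eventually_const hγ hdiff hconst)
  simp only [fderiv_clm_apply hf' (differentiableAt_const _), fderiv_fun_const, Pi.zero_apply,
    ContinuousLinearMap.comp_zero, zero_add, ContinuousLinearMap.flip_apply]
  rw [add_comm]
  exact hsecond.unique hzero

end SecondVariation

open NormedSpace

namespace Matrix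

variable {m : Type*} [Fintype m] [DecidableEq m]

/- `hasDerivAt_exp_smul_const` needs a normed algebra, hence the operator norm here; `HasDerivAt`
only depends on the topology, so the result also holds for the elementwise norm. -/
open scoped Norms.Operator in
theorem hasDerivAt_exp_smul_mul_mul_transpose (D X : Matrix m m ℝ) (t : ℝ) :
    HasDerivAt (fun t : ℝ => exp (t • D) * X * (exp (t • D))ᵀ)
      (exp (t • D) * (D * X + X * Dᵀ) * (exp (t • D))ᵀ) t := by
  have : CompleteSpace (Matrix m m ℝ) := FiniteDimensional.complete ℝ _
  simp_rw [← exp_transpose, transpose_smul]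
  refine (((hasDerivAt_exp_smul_const D t).mul_const X).mul
    (hasDerivAt_exp_smul_const' Dᵀ t)).congr_deriv ?_
  noncomm_ring

theorem exp_smul_mul_transpose_eq_one {D : Matrix m m ℝ} (hD : Dᵀ = -D) (t : ℝ) :
    exp (t • D) * (exp (t • D))ᵀ = 1 := by
  rw [← exp_transpose, transpose_smul, hD, smul_neg, exp_neg]
  exact mul_nonsing_inv _ ((isUnit_iff_isUnit_det _).mp (isUnit_exp _))

end Matrix

theorem stmt14_general (n : ℕ) (Γ : Set (Matrix (Fin n) (Fin n) ℝ))
    (F : Matrix (Fin n) (Fin n) ℝ → ℝ)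
    (hFinv : ∀ Q : Matrix (Fin n) (Fin n) ℝ, Q * Qᵀ = 1 → ∀ s ∈ Γ, F (Q * s * Qᵀ) = F s)
    (r : Matrix (Fin n) (Fin n) ℝ) (hr : r ∈ Γ)
    (hF : ContDiffAt ℝ 2 F r)
    (D : Matrix (Fin n) (Fin n) ℝ) (hD : Dᵀ = -D) :
    fderiv ℝ F r (D * D * r + 2 • (D * r * Dᵀ) + r * (D * D)ᵀ)
      + fderiv ℝ (fun s => fderiv ℝ F s (D * r + r * Dᵀ)) r (D * r + r * Dᵀ) = 0 := by
  have h0 : ∀ X, exp ((0 : ℝ) • D) * X * (exp ((0 : ℝ) • D))ᵀ = X := by simp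
  have hsecond : D * (D * r + r * Dᵀ) + (D * r + r * Dᵀ) * Dᵀ
      = D * D * r + 2 • (D * r * Dᵀ) + r * (D * D)ᵀ := by
    rw [transpose_mul]; noncomm_ring
  have hγ' : HasDerivAt (fun t : ℝ => exp (t • D) * (D * r + r * Dᵀ) * (exp (t • D))ᵀ)
      (D * D * r + 2 • (D * r * Dᵀ) + r * (D * D)ᵀ) 0 := by
    simpa only [h0, hsecond] using hasDerivAt_exp_smul_mul_mul_transpose D (D * r + r * Dᵀ) 0
  have h := fderiv_add_fderiv_fderiv_eq_zero_of_eventually_const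
    (γ := fun t : ℝ => exp (t • D) * r * (exp (t • D))ᵀ) (c := F r) (by simpa only [h0] using hF)
    (.of_forall fun t => hasDerivAt_exp_smul_mul_mul_transpose D r t) hγ'
    (.of_forall fun t => hFinv _ (exp_smul_mul_transpose_eq_one hD t) r hr)
  simp only [h0] at h
  exact h

/-- Second-variation identity for orthogonally invariant functions: with `F` invariant
under orthogonal conjugation, concave and twice differentiable at the symmetric matrix
`r ∈ Γ`, and `D` skew-symmetric,
`F^{ij}(D²r + 2DrDᵀ + r(D²)ᵀ)_{ij} + F^{ij,kl}(Dr + rDᵀ)_{ij}(Dr + rDᵀ)_{kl} = 0`. -/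
theorem stmt14 (n : ℕ) (Γ : Set (Matrix (Fin n) (Fin n) ℝ))
    (F : Matrix (Fin n) (Fin n) ℝ → ℝ)
    (hopen : IsOpen Γ) (hconv : Convex ℝ Γ) (hconc : ConcaveOn ℝ Γ F)
    (hΓinv : ∀ Q : Matrix (Fin n) (Fin n) ℝ, Q * Qᵀ = 1 → ∀ s ∈ Γ, Q * s * Qᵀ ∈ Γ)
    (hFinv : ∀ Q : Matrix (Fin n) (Fin n) ℝ, Q * Qᵀ = 1 → ∀ s ∈ Γ, F (Q * s * Qᵀ) = F s)
    (r : Matrix (Fin n) (Fin n) ℝ) (hr : r ∈ Γ) (hrsym : rᵀ = r)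
    (hF : ContDiffAt ℝ 2 F r)
    (D : Matrix (Fin n) (Fin n) ℝ) (hD : Dᵀ = -D) :
    fderiv ℝ F r (D * D * r + 2 • (D * r * Dᵀ) + r * (D * D)ᵀ)
      + fderiv ℝ (fun s => fderiv ℝ F s (D * r + r * Dᵀ)) r (D * r + r * Dᵀ) = 0 :=
  stmt14_general n Γ F hFinv r hr hF D hD
end

section
/- Let Γ ⊆ Sym(n,ℝ) be an open convex cone and F ∈ C¹(Γ) with F_r > 0 (condition F1) and suppose F is orthogonally invariant with F(Γ) = (a₀, ∞) for finite a₀, F concave, and satisfying F5⁺ in the positive cone K⁺. Then F satisfies condition F6 in K⁺: for r ∈ K⁺ with a ≤ F(r) ≤ b, the quantity ℰ₂ := F^{ij} r_{ik} r_{jk} satisfies ℰ₂ ≤ (F(r) − a₀)|r| ≤ (b − a₀)|r|, where |r| is the spectral norm. In particular ℰ₂/( |r| 𝒯(r)) → 0 as |r| → ∞ if 𝒯(r) → ∞ (condition F5⁺). -/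
/-!
Diagonalising `r ∈ K⁺` shows `|r| r - r² ⪰ 0`, and pairing this with the positive definite
`F_r` gives `ℰ₂ = tr (F_r r²) ≤ |r| tr (F_r r)`. Concavity of `F` along the ray `t ↦ t r`,
together with `F > a₀` on it, bounds the slope at `t = 1` by `tr (F_r r) ≤ F(r) - a₀`.
Then F5⁺ makes `(b - a₀) / 𝒯(r)` as small as we like for large `|r|`.
-/

open Matrix

/-- Spectral norm of a symmetric matrix: the supremum of its eigenvalues
(for a positive definite matrix this is the operator norm). -/
noncomputable def spec (n : ℕ) (r : Matrix (Fin n) (Fin n) ℝ) : ℝ :=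
  if hr : r.IsHermitian then sSup (Set.range hr.eigenvalues) else 0

open Set Filter Topology

lemma eigenvalues_le_spec {n : ℕ} {r : Matrix (Fin n) (Fin n) ℝ} (hr : r.IsHermitian)
    (i : Fin n) : hr.eigenvalues i ≤ spec n r := by
  rw [spec, dif_pos hr]
  exact le_csSup (finite_range _).bddAbove ⟨i, rfl⟩

lemma spec_nonneg {n : ℕ} {r : Matrix (Fin n) (Fin n) ℝ} (hr : r.PosSemidef) :
    0 ≤ spec n r := by
  rw [spec, dif_pos hr.isHermitian]
  exact Real.sSup_nonneg <| forall_mem_range.mpr hr.eigenvalues_nonneg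

open scoped MatrixOrder in
lemma Matrix.PosSemidef.spec_smul_sub_mul_self {n : ℕ} {r : Matrix (Fin n) (Fin n) ℝ}
    (hr : r.PosSemidef) : (spec n r • r - r * r).PosSemidef := by
  have hcfc : spec n r • r - r * r = cfc (fun x => spec n r * x - x * x) r := by
    rw [cfc_sub .., cfc_const_mul .., cfc_mul .., cfc_id' ℝ r]
  rw [hcfc, ← nonneg_iff_posSemidef]
  refine cfc_nonneg fun x hx => ?_
  obtain ⟨i, rfl⟩ := hr.isHermitian.spectrum_real_eq_range_eigenvalues ▸ hx
  nlinarith [hr.eigenvalues_nonneg i, eigenvalues_le_spec hr.isHermitian i]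

open scoped MatrixOrder in
lemma Matrix.PosSemidef.trace_mul_nonneg {n : Type*} [Fintype n]
    {A B : Matrix n n ℝ} (hA : A.PosSemidef) (hB : B.PosSemidef) : 0 ≤ (A * B).trace := by
  classical
  obtain ⟨C, rfl⟩ := CStarAlgebra.nonneg_iff_eq_star_mul_self.mp hB.nonneg
  rw [← mul_assoc, trace_mul_cycle, star_eq_conjTranspose]
  exact (hA.mul_mul_conjTranspose_same C).trace_nonneg

lemma Matrix.PosSemidef.trace_mul_mul_self_le {n : ℕ} {A r : Matrix (Fin n) (Fin n) ℝ}
    (hA : A.PosSemidef) (hr : r.PosSemidef) :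
    (A * (r * r)).trace ≤ spec n r * (A * r).trace := by
  have h := hA.trace_mul_nonneg hr.spec_smul_sub_mul_self
  rw [Matrix.mul_sub, trace_sub, Matrix.mul_smul, trace_smul, smul_eq_mul] at h
  linarith

lemma Matrix.trace_mul_transpose {m n : Type*} [Fintype m] [Fintype n] (A B : Matrix m n ℝ) :
    (A * Bᵀ).trace = ∑ i, ∑ j, A i j * B i j := by
  simp [trace, mul_apply]

lemma Matrix.trace_mul_mul_transpose {m n : Type*} [Fintype m] [Fintype n]
    (A : Matrix m m ℝ) (r : Matrix m n ℝ) :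
    (A * (r * rᵀ)).trace = ∑ i, ∑ j, ∑ k, A i j * r i k * r j k := by
  have hsymm : (r * rᵀ)ᵀ = r * rᵀ := by rw [transpose_mul, transpose_transpose]
  rw [← hsymm, trace_mul_transpose]
  simp only [mul_apply, transpose_apply, Finset.mul_sum, mul_assoc]

lemma ConcaveOn.deriv_mul_le_sub {g : ℝ → ℝ} {c x g' a₀ : ℝ} (hg : ConcaveOn ℝ (Ioi c) g)
    (hcx : c < x) (hd : HasDerivAt g g' x) (hlow : ∀ t ∈ Ioi c, a₀ < g t) :
    g' * (x - c) ≤ g x - a₀ := by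
  have htangent : ∀ t ∈ Ioo c x, g' * (x - t) ≤ g x - a₀ := fun t ht => by
    have hslope := hg.le_slope_of_hasDerivAt ht.1 (mem_Ioi.mpr hcx) ht.2 hd
    rw [slope_def_field, le_div_iff₀ (sub_pos.mpr ht.2)] at hslope
    linarith [hlow t ht.1]
  have hlim : Tendsto (fun t => g' * (x - t)) (𝓝[>] c) (𝓝 (g' * (x - c))) :=
    (continuous_const.mul (continuous_const.sub continuous_id)).continuousWithinAt
  exact le_of_tendsto hlim <| eventually_of_mem (Ioo_mem_nhdsGT hcx) htangent

lemma ConcaveOn.hasDerivAt_ray_le {E : Type*} [AddCommGroup E] [Module ℝ E] {Γ : Set E}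
    {F : E → ℝ} {r : E} {T a₀ : ℝ} (hconc : ConcaveOn ℝ Γ F)
    (hray : ∀ t : ℝ, 0 < t → t • r ∈ Γ) (hlow : ∀ s ∈ Γ, a₀ < F s)
    (hd : HasDerivAt (fun t : ℝ => F (r + t • r)) T 0) : T ≤ F r - a₀ := by
  have hconc_ray : ConcaveOn ℝ (Ioi 0) (fun s : ℝ => F (s • r)) :=
    (hconc.comp_affineMap (LinearMap.toSpanSingleton ℝ E r).toAffineMap).subset
      (fun t ht => hray t ht) (convex_Ioi 0)
  have hd_ray : HasDerivAt (fun s : ℝ => F (s • r)) T 1 := by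
    rw [← sub_self 1] at hd
    simpa only [sub_smul, one_smul, add_sub_cancel] using hd.comp_sub_const 1 1
  simpa using hconc_ray.deriv_mul_le_sub one_pos hd_ray fun t ht => hlow _ (hray t ht)

lemma sum_grad_mul_sq_le {n : ℕ} {Γ : Set (Matrix (Fin n) (Fin n) ℝ)}
    {F : Matrix (Fin n) (Fin n) ℝ → ℝ} {A r : Matrix (Fin n) (Fin n) ℝ} {a₀ : ℝ}
    (hconc : ConcaveOn ℝ Γ F) (hray : ∀ t : ℝ, 0 < t → t • r ∈ Γ)
    (hlow : ∀ s ∈ Γ, a₀ < F s)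
    (hgrad : HasDerivAt (fun t : ℝ => F (r + t • r)) (∑ i, ∑ j, A i j * r i j) 0)
    (hA : A.PosSemidef) (hr : r.PosSemidef) :
    ∑ i, ∑ j, ∑ m, A i j * r i m * r j m ≤ (F r - a₀) * spec n r := by
  have hrT : rᵀ = r := by simpa [conjTranspose_eq_transpose_of_trivial] using hr.isHermitian.eq
  have hpair : (A * r).trace ≤ F r - a₀ := by
    simpa only [← trace_mul_transpose, hrT] using hconc.hasDerivAt_ray_le hray hlow hgrad
  calc ∑ i, ∑ j, ∑ m, A i j * r i m * r j m = (A * (r * r)).trace := by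
        rw [← trace_mul_mul_transpose, hrT]
    _ ≤ spec n r * (A * r).trace := hA.trace_mul_mul_self_le hr
    _ ≤ spec n r * (F r - a₀) := mul_le_mul_of_nonneg_left hpair (spec_nonneg hr)
    _ = (F r - a₀) * spec n r := mul_comm _ _

theorem stmt19_general (n : ℕ) (Γ : Set (Matrix (Fin n) (Fin n) ℝ))
    (F : Matrix (Fin n) (Fin n) ℝ → ℝ)
    (hcone : ∀ t : ℝ, 0 < t → ∀ r ∈ Γ, t • r ∈ Γ)
    (hconc : ConcaveOn ℝ Γ F)
    (FrM : Matrix (Fin n) (Fin n) ℝ → Matrix (Fin n) (Fin n) ℝ)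
    (hgrad : ∀ s ∈ Γ, ∀ u : Matrix (Fin n) (Fin n) ℝ,
      HasDerivAt (fun t : ℝ => F (s + t • u)) (∑ i, ∑ j, FrM s i j * u i j) 0)
    (hFrpos : ∀ s ∈ Γ, (FrM s).PosDef)
    (a₀ : ℝ) (hrange : ∀ s ∈ Γ, a₀ < F s)
    (hF5plus : ∀ a b : ℝ, a₀ < a → ∀ C : ℝ, ∃ R : ℝ, ∀ s ∈ Γ, s.PosDef →
      a ≤ F s → F s ≤ b → R ≤ spec n s → C ≤ (FrM s).trace) :
    ∀ a b : ℝ, a₀ < a →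
      (∀ r ∈ Γ, r.PosDef → a ≤ F r → F r ≤ b →
        (∑ i, ∑ j, ∑ m, FrM r i j * r i m * r j m) ≤ (F r - a₀) * spec n r ∧
        (∑ i, ∑ j, ∑ m, FrM r i j * r i m * r j m) ≤ (b - a₀) * spec n r) ∧
      (∀ ε : ℝ, 0 < ε → ∃ R : ℝ, ∀ r ∈ Γ, r.PosDef → a ≤ F r → F r ≤ b →
        R ≤ spec n r →
        (∑ i, ∑ j, ∑ m, FrM r i j * r i m * r j m) ≤ ε * spec n r * (FrM r).trace) := by
  intro a b ha
  have hE₂ : ∀ r ∈ Γ, r.PosDef → ∀ c, F r ≤ c →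
      ∑ i, ∑ j, ∑ m, FrM r i j * r i m * r j m ≤ (c - a₀) * spec n r := fun r hrΓ hr c hc =>
    (sum_grad_mul_sq_le hconc (fun t ht => hcone t ht r hrΓ) hrange (hgrad r hrΓ r)
      (hFrpos r hrΓ).posSemidef hr.posSemidef).trans
      (mul_le_mul_of_nonneg_right (by linarith) (spec_nonneg hr.posSemidef))
  refine ⟨fun r hrΓ hr _ hb => ⟨hE₂ r hrΓ hr _ le_rfl, hE₂ r hrΓ hr b hb⟩, fun ε hε => ?_⟩
  obtain ⟨R, hR⟩ := hF5plus a b ha ((b - a₀) / ε)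
  refine ⟨R, fun r hrΓ hr ha' hb hRr => ?_⟩
  have hba : b - a₀ ≤ ε * (FrM r).trace := (div_le_iff₀' hε).mp (hR r hrΓ hr ha' hb hRr)
  calc ∑ i, ∑ j, ∑ m, FrM r i j * r i m * r j m ≤ (b - a₀) * spec n r := hE₂ r hrΓ hr b hb
    _ ≤ (ε * (FrM r).trace) * spec n r :=
        mul_le_mul_of_nonneg_right hba (spec_nonneg hr.posSemidef)
    _ = ε * spec n r * (FrM r).trace := by ring

/-- Condition F6 in the positive cone: if `F` is `C¹` with positive definite gradient `F_r`,
orthogonally invariant, concave, with range `(a₀, ∞)` for finite `a₀` and satisfying F5⁺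
on `K⁺`, then for positive definite `r ∈ Γ` with `a ≤ F(r) ≤ b`,
`ℰ₂ = F^{ij} r_{ik} r_{jk} ≤ (F(r) − a₀)|r| ≤ (b − a₀)|r|` (`|r|` the spectral norm), and
consequently `ℰ₂ ≤ ε |r| 𝒯(r)` for `|r|` large. -/
theorem stmt19 (n : ℕ) (hn : 0 < n) (Γ : Set (Matrix (Fin n) (Fin n) ℝ))
    (F : Matrix (Fin n) (Fin n) ℝ → ℝ)
    (hopen : IsOpen Γ) (hconv : Convex ℝ Γ)
    (hcone : ∀ t : ℝ, 0 < t → ∀ r ∈ Γ, t • r ∈ Γ)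
    (hsym : ∀ r ∈ Γ, r.IsHermitian)
    (hconc : ConcaveOn ℝ Γ F)
    (FrM : Matrix (Fin n) (Fin n) ℝ → Matrix (Fin n) (Fin n) ℝ)
    (hgrad : ∀ s ∈ Γ, ∀ u : Matrix (Fin n) (Fin n) ℝ,
      HasDerivAt (fun t : ℝ => F (s + t • u)) (∑ i, ∑ j, FrM s i j * u i j) 0)
    (hFrpos : ∀ s ∈ Γ, (FrM s).PosDef)
    (hΓinv : ∀ Q : Matrix (Fin n) (Fin n) ℝ, Q * Qᵀ = 1 → ∀ s ∈ Γ, Q * s * Qᵀ ∈ Γ)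
    (hFinv : ∀ Q : Matrix (Fin n) (Fin n) ℝ, Q * Qᵀ = 1 → ∀ s ∈ Γ, F (Q * s * Qᵀ) = F s)
    (a₀ : ℝ) (hrange : ∀ s ∈ Γ, a₀ < F s)
    (hsurj : ∀ y : ℝ, a₀ < y → ∃ s ∈ Γ, F s = y)
    (hF5plus : ∀ a b : ℝ, a₀ < a → ∀ C : ℝ, ∃ R : ℝ, ∀ s ∈ Γ, s.PosDef →
      a ≤ F s → F s ≤ b → R ≤ spec n s → C ≤ (FrM s).trace) :
    ∀ a b : ℝ, a₀ < a →
      (∀ r ∈ Γ, r.PosDef → a ≤ F r → F r ≤ b →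
        (∑ i, ∑ j, ∑ m, FrM r i j * r i m * r j m) ≤ (F r - a₀) * spec n r ∧
        (∑ i, ∑ j, ∑ m, FrM r i j * r i m * r j m) ≤ (b - a₀) * spec n r) ∧
      (∀ ε : ℝ, 0 < ε → ∃ R : ℝ, ∀ r ∈ Γ, r.PosDef → a ≤ F r → F r ≤ b →
        R ≤ spec n r →
        (∑ i, ∑ j, ∑ m, FrM r i j * r i m * r j m) ≤ ε * spec n r * (FrM r).trace) :=
  stmt19_general n Γ F hcone hconc FrM hgrad hFrpos a₀ hrange hF5plus
end
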